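/- Let δ, ε > 0 and let J^μ be a weighted graph such that s(K2; J^μ) ≤ δ and μ({u : uv ∈ E(J)}) ≤ ε for every vertex v ∈ V(J). Let Z = (z1, …, zr) be r vertices of J chosen independently at random according to μ. Then for every integer ℓ ≥ 1, the probability that the subgraph of J induced by the chosen vertices contains a subgraph isomorphic to the complete bipartite graph K_{ℓ,ℓ} is at most 3^r · δ^ℓ. -/

import Mathlib

open Finset
open scoped Classical

def IsStrongHom {α β : Type} (H : SimpleGraph α) (G : SimpleGraph β) (φ : α → β) : Prop :=
  ∀ u v : α, H.Adj u v ↔ G.Adj (φ u) (φ v)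

def SimpleGraph.blowup {α : Type} (H : SimpleGraph α) (k : α → ℕ) :
    SimpleGraph (Σ v : α, Fin (k v)) where
  Adj x y := H.Adj x.1 y.1
  symm := ⟨fun _ _ h => H.symm.symm _ _ h⟩
  loopless := ⟨fun x h => H.loopless.irrefl x.1 h⟩

def IsWeight {β : Type} [Fintype β] (μ : β → ℝ) : Prop :=
  (∀ v, 0 < μ v) ∧ ∑ v, μ v = 1

noncomputable def sdensity {α β : Type} [Fintype α] [Fintype β]
    (H : SimpleGraph α) (G : SimpleGraph β) (μ : β → ℝ) : ℝ :=
  ∑ ψ : α → β, if IsStrongHom H G ψ then ∏ v : α, μ (ψ v) else 0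

def IsTwinFree {α : Type} (G : SimpleGraph α) : Prop :=
  ∀ u v : α, (∀ w, G.Adj u w ↔ G.Adj v w) → u = v

def WEquiv {α β : Type} [Fintype α] [Fintype β]
    (G1 : SimpleGraph α) (μ1 : α → ℝ) (G2 : SimpleGraph β) (μ2 : β → ℝ) : Prop :=
  ∃ (m : ℕ) (T : SimpleGraph (Fin m)) (π1 : α → Fin m) (π2 : β → Fin m),
    IsTwinFree T ∧ IsStrongHom G1 T π1 ∧ IsStrongHom G2 T π2 ∧
    Function.Surjective π1 ∧ Function.Surjective π2 ∧
    ∀ t : Fin m,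
      (∑ u ∈ Finset.univ.filter (fun u => π1 u = t), μ1 u) =
        ∑ u ∈ Finset.univ.filter (fun u => π2 u = t), μ2 u

noncomputable def d1dist {α β : Type} [Fintype α] [Fintype β]
    (G1 : SimpleGraph α) (μ1 : α → ℝ) (G2 : SimpleGraph β) (μ2 : β → ℝ) : ℝ :=
  sInf {x : ℝ | ∃ (m : ℕ) (F1 F2 : SimpleGraph (Fin m)) (μ : Fin m → ℝ),
    IsWeight μ ∧ WEquiv F1 μ G1 μ1 ∧ WEquiv F2 μ G2 μ2 ∧
    x = ∑ u : Fin m, ∑ v : Fin m, μ u * μ v *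
      |(if F1.Adj u v then (1:ℝ) else 0) - (if F2.Adj u v then (1:ℝ) else 0)|}

noncomputable def sdensityP {α β : Type} [Fintype α] [Fintype β]
    (H : SimpleGraph α) (u0 : α) (G : SimpleGraph β) (v0 : β) (μ : β → ℝ) : ℝ :=
  ∑ ψ : α → β, if ψ u0 = v0 ∧ IsStrongHom H G ψ
    then ∏ v ∈ Finset.univ.erase u0, μ (ψ v) else 0

def GraphBalanced {α : Type} [Fintype α] (H : SimpleGraph α) : Prop :=
  ∃ (m : ℕ) (Ht : SimpleGraph (Fin m)) (k : Fin m → ℕ),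
    (∀ v, 0 < k v) ∧ IsTwinFree Ht ∧ Nonempty (H ≃g Ht.blowup k) ∧
    ∀ σ : Ht ≃g Ht, ∀ v, k (σ v) = k v

/-! If the sampled vertices contain a `K_{ℓ,ℓ}` on disjoint position sets `A` and `B`, then the
`ℓ` disjoint position pairs `(a k, b k)` of a perfect matching between `A` and `B` all land on
edges of `J`. The positions being distinct and sampled independently, this has probability exactly
`s(K₂; J^μ)^ℓ ≤ δ^ℓ`. A union bound over the at most `3^r` disjoint pairs `(A, B)` (each position
lies in `A`, in `B`, or in neither) finishes the proof. -/

open Function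

lemma isStrongHom_completeGraph_two_iff {β : Type} (J : SimpleGraph β) (ψ : Fin 2 → β) :
    IsStrongHom (SimpleGraph.completeGraph (Fin 2)) J ψ ↔ J.Adj (ψ 0) (ψ 1) := by
  refine ⟨fun h => (h 0 1).mp (by simp), fun h u v => ?_⟩
  fin_cases u <;> fin_cases v <;> simp [h, h.symm]

lemma ite_le_sum_ite_of_imp_exists {α : Type} {S : Finset α} {P : Prop} [Decidable P]
    {Q : α → Prop} [DecidablePred Q] {x : ℝ} (hx : 0 ≤ x) (h : P → ∃ p ∈ S, Q p) :
    (if P then x else 0) ≤ ∑ p ∈ S, if Q p then x else 0 := by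
  split_ifs with hP
  · obtain ⟨p, hpS, hQ⟩ := h hP
    exact (if_pos hQ).symm.le.trans
      (Finset.single_le_sum (f := fun p => if Q p then x else 0) (fun _ _ => by positivity) hpS)
  · exact Finset.sum_nonneg fun _ _ => by positivity

lemma card_le_three_pow_of_forall_disjoint {ι : Type} [Fintype ι] [DecidableEq ι]
    (S : Finset (Finset ι × Finset ι)) (hS : ∀ p ∈ S, Disjoint p.1 p.2) :
    #S ≤ 3 ^ Fintype.card ι := by
  let φ : Finset ι × Finset ι → ι → Option Bool :=
    fun p i => if i ∈ p.1 then some true else if i ∈ p.2 then some false else none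
  have hφ : ∀ p ∈ S, ∀ i, (i ∈ p.1 ↔ φ p i = some true) ∧ (i ∈ p.2 ↔ φ p i = some false) := by
    intro p hp i
    by_cases h1 : i ∈ p.1
    · simp [φ, h1, disjoint_left.mp (hS p hp) h1]
    · by_cases h2 : i ∈ p.2 <;> simp [φ, h1, h2]
  have hinj : Set.InjOn φ S := fun p hp q hq hpq => Prod.ext
    (Finset.ext fun i => by rw [(hφ p hp i).1, (hφ q hq i).1, hpq])
    (Finset.ext fun i => by rw [(hφ p hp i).2, (hφ q hq i).2, hpq])
  simpa using Finset.card_le_card_of_injOn φ (fun p _ => Finset.mem_univ (φ p)) hinj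

lemma exists_injective_fin_mem {ι : Type} {A : Finset ι} {ℓ : ℕ} (hA : #A = ℓ) :
    ∃ a : Fin ℓ → ι, Injective a ∧ ∀ k, a k ∈ A :=
  let e := (Fintype.equivFinOfCardEq (α := A) (by rwa [Fintype.card_coe])).symm
  ⟨fun k => e k, Subtype.val_injective.comp e.injective, fun k => (e k).2⟩

section Weight

variable {β : Type} [Fintype β] {μ : β → ℝ}

lemma sum_prod_eq_one_of_sum_eq_one (hμ : ∑ b, μ b = 1) (ι : Type) [Fintype ι] [DecidableEq ι] :
    ∑ z : ι → β, ∏ i, μ (z i) = 1 := by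
  rw [← Fintype.prod_sum (fun (_ : ι) b => μ b)]
  simp [hμ]

lemma sum_ite_comp_inl (hμ : ∑ b, μ b = 1) {κ C : Type} [Fintype κ] [DecidableEq κ]
    [Fintype C] [DecidableEq C] (P : (κ → β) → Prop) [DecidablePred P] :
    ∑ z : κ ⊕ C → β, (if P (z ∘ Sum.inl) then ∏ i, μ (z i) else 0) =
      ∑ y : κ → β, if P y then ∏ k, μ (y k) else 0 := by
  rw [← (Equiv.sumArrowEquivProdArrow κ C β).symm.sum_comp, Fintype.sum_prod_type]
  refine Fintype.sum_congr _ _ fun y => ?_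
  have hinl (x : C → β) : (Equiv.sumArrowEquivProdArrow κ C β).symm (y, x) ∘ Sum.inl = y := rfl
  simp only [hinl, Fintype.prod_sum_type, Equiv.sumArrowEquivProdArrow_symm_apply_inl,
    Equiv.sumArrowEquivProdArrow_symm_apply_inr, ← ite_zero_mul, ← Finset.mul_sum,
    sum_prod_eq_one_of_sum_eq_one hμ, mul_one]

lemma sum_ite_comp_of_injective (hμ : ∑ b, μ b = 1) {ι κ : Type} [Fintype ι] [DecidableEq ι]
    [Fintype κ] [DecidableEq κ] {w : κ → ι} (hw : Injective w) (P : (κ → β) → Prop)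
    [DecidablePred P] :
    ∑ z : ι → β, (if P (z ∘ w) then ∏ i, μ (z i) else 0) =
      ∑ y : κ → β, if P y then ∏ k, μ (y k) else 0 := by
  let e : κ ⊕ ↥(Set.range w)ᶜ ≃ ι :=
    (Equiv.sumCongr (Equiv.ofInjective w hw) (Equiv.refl _)).trans (Equiv.Set.sumCompl _)
  rw [← sum_ite_comp_inl (C := ↥(Set.range w)ᶜ) hμ P]
  refine Fintype.sum_equiv (e.symm.arrowCongr (Equiv.refl β)) _ _ fun z => ?_
  have hcomp : (z ∘ e) ∘ Sum.inl = z ∘ w := rfl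
  change _ = if P ((z ∘ e) ∘ Sum.inl) then ∏ j, μ (z (e j)) else 0
  rw [hcomp, Equiv.prod_comp e (fun i => μ (z i))]

lemma sum_ite_forall_adj_inl_inr (J : SimpleGraph β) (κ : Type) [Fintype κ] [DecidableEq κ] :
    ∑ y : κ ⊕ κ → β, (if ∀ k, J.Adj (y (Sum.inl k)) (y (Sum.inr k)) then ∏ j, μ (y j) else 0) =
      (∑ p : β × β, if J.Adj p.1 p.2 then μ p.1 * μ p.2 else 0) ^ Fintype.card κ := by
  rw [← Finset.card_univ, ← Finset.prod_const, Fintype.prod_sum]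
  refine Fintype.sum_equiv ((Equiv.sumArrowEquivProdArrow κ κ β).trans
    (Equiv.arrowProdEquivProdArrow κ _ _).symm) _ _ fun y => ?_
  change _ = ∏ k, if J.Adj (y (Sum.inl k)) (y (Sum.inr k))
    then μ (y (Sum.inl k)) * μ (y (Sum.inr k)) else 0
  rw [Fintype.prod_ite_zero, Fintype.prod_sum_type, Finset.prod_mul_distrib]

lemma sdensity_completeGraph_two (J : SimpleGraph β) :
    sdensity (SimpleGraph.completeGraph (Fin 2)) J μ =
      ∑ p : β × β, if J.Adj p.1 p.2 then μ p.1 * μ p.2 else 0 := by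
  unfold sdensity
  convert Fintype.sum_equiv (piFinTwoEquiv fun _ => β)
    (fun ψ => if IsStrongHom (SimpleGraph.completeGraph (Fin 2)) J ψ then ∏ v, μ (ψ v) else 0)
    _ fun ψ => ?_
  simp only [isStrongHom_completeGraph_two_iff, Fin.prod_univ_two, piFinTwoEquiv_apply]

lemma sdensity_nonneg {α : Type} [Fintype α] (H : SimpleGraph α) (J : SimpleGraph β)
    (hμ : ∀ b, 0 ≤ μ b) : 0 ≤ sdensity H J μ :=
  Finset.sum_nonneg fun _ _ => by split_ifs <;> [exact Finset.prod_nonneg fun _ _ => hμ _; rfl]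

lemma sum_ite_completeBipartite_le_sdensity_pow (hμ : IsWeight μ) (J : SimpleGraph β)
    {ι : Type} [Fintype ι] [DecidableEq ι] {A B : Finset ι} (hAB : Disjoint A B) {ℓ : ℕ}
    (hA : #A = ℓ) (hB : #B = ℓ) :
    ∑ z : ι → β, (if ∀ i ∈ A, ∀ j ∈ B, J.Adj (z i) (z j) then ∏ i, μ (z i) else 0) ≤
      sdensity (SimpleGraph.completeGraph (Fin 2)) J μ ^ ℓ := by
  obtain ⟨a, ha_inj, ha⟩ := exists_injective_fin_mem hA
  obtain ⟨b, hb_inj, hb⟩ := exists_injective_fin_mem hB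
  have hw : Injective (Sum.elim a b) :=
    ha_inj.sumElim hb_inj fun j k hjk => disjoint_left.mp hAB (ha j) (hjk ▸ hb k)
  calc _ ≤ ∑ z : ι → β, if ∀ k, J.Adj (z (a k)) (z (b k)) then ∏ i, μ (z i) else 0 := by
        refine Finset.sum_le_sum fun z _ => ?_
        split_ifs with hAdj hmatch
        · rfl
        · exact absurd (fun k => hAdj _ (ha k) _ (hb k)) hmatch
        · exact Finset.prod_nonneg fun i _ => (hμ.1 _).le
        · rfl
    _ = ∑ y : Fin ℓ ⊕ Fin ℓ → β,
          if ∀ k, J.Adj (y (Sum.inl k)) (y (Sum.inr k)) then ∏ j, μ (y j) else 0 :=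
        sum_ite_comp_of_injective hμ.2 hw (fun y => ∀ k, J.Adj (y (Sum.inl k)) (y (Sum.inr k)))
    _ = _ := by
        have hmatch := sum_ite_forall_adj_inl_inr (μ := μ) J (Fin ℓ)
        rw [Fintype.card_fin, ← sdensity_completeGraph_two] at hmatch
        -- the two sums differ only in how `∀ k : Fin ℓ, _` is decided
        convert hmatch using 3

end Weight

theorem stmt4_general {β : Type} [Fintype β] (J : SimpleGraph β) (μ : β → ℝ) (hμ : IsWeight μ)
    (δ : ℝ)
    (hedge : sdensity (SimpleGraph.completeGraph (Fin 2)) J μ ≤ δ)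
    (r ℓ : ℕ) :
    ∑ z : Fin r → β,
      (if ∃ A B : Finset (Fin r), Disjoint A B ∧ A.card = ℓ ∧ B.card = ℓ ∧
            ∀ i ∈ A, ∀ j ∈ B, J.Adj (z i) (z j)
        then ∏ i : Fin r, μ (z i) else 0) ≤ 3 ^ r * δ ^ ℓ := by
  let S := univ.filter fun p : Finset (Fin r) × Finset (Fin r) =>
    Disjoint p.1 p.2 ∧ #p.1 = ℓ ∧ #p.2 = ℓ
  have hs : 0 ≤ sdensity (SimpleGraph.completeGraph (Fin 2)) J μ :=
    sdensity_nonneg _ J fun b => (hμ.1 b).le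
  have hδ : 0 ≤ δ := hs.trans hedge
  have hS : #S ≤ 3 ^ r := by
    simpa using card_le_three_pow_of_forall_disjoint S fun p hp => (mem_filter.mp hp).2.1
  calc _ ≤ ∑ z : Fin r → β, ∑ p ∈ S,
        if ∀ i ∈ p.1, ∀ j ∈ p.2, J.Adj (z i) (z j) then ∏ i, μ (z i) else 0 :=
      sum_le_sum fun z _ => ite_le_sum_ite_of_imp_exists (prod_nonneg fun i _ => (hμ.1 _).le)
        fun ⟨A, B, hAB, hA, hB, hadj⟩ => ⟨(A, B), mem_filter.mpr ⟨mem_univ _, hAB, hA, hB⟩, hadj⟩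
    _ = ∑ p ∈ S, ∑ z : Fin r → β,
        if ∀ i ∈ p.1, ∀ j ∈ p.2, J.Adj (z i) (z j) then ∏ i, μ (z i) else 0 := sum_comm
    _ ≤ ∑ _p ∈ S, δ ^ ℓ := sum_le_sum fun p hp => by
      obtain ⟨-, hAB, hA, hB⟩ := mem_filter.mp hp
      convert (sum_ite_completeBipartite_le_sdensity_pow hμ J hAB hA hB).trans
        (pow_le_pow_left₀ hs hedge ℓ) using 3
    _ ≤ 3 ^ r * δ ^ ℓ := by
      rw [sum_const, nsmul_eq_mul]
      gcongr
      exact_mod_cast hS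

theorem stmt4 {β : Type} [Fintype β] (J : SimpleGraph β) (μ : β → ℝ) (hμ : IsWeight μ)
    (δ ε : ℝ) (hδ : 0 < δ) (hε : 0 < ε)
    (hedge : sdensity (SimpleGraph.completeGraph (Fin 2)) J μ ≤ δ)
    (hdeg : ∀ v : β, ∑ u ∈ Finset.univ.filter (fun u => J.Adj v u), μ u ≤ ε)
    (r ℓ : ℕ) (hℓ : 1 ≤ ℓ) :
    ∑ z : Fin r → β,
      (if ∃ A B : Finset (Fin r), Disjoint A B ∧ A.card = ℓ ∧ B.card = ℓ ∧
            ∀ i ∈ A, ∀ j ∈ B, J.Adj (z i) (z j)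
        then ∏ i : Fin r, μ (z i) else 0) ≤ 3 ^ r * δ ^ ℓ :=
  stmt4_general J μ hμ δ hedge r ℓ
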